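/- arXiv:2401.14301 — 5 statements merged into one kernel-verified Lean document; each statement's English description precedes it below -/
import Mathlib

section
/- Let p > 3 be a prime and let d be an integer with Legendre symbol (d/p) = 1. Let S̄(d,p) denote the determinant of the ((p−1)/2)×((p−1)/2) matrix obtained from the matrix [((j²+dk²)/p)]_{1≤j,k≤(p−1)/2} by replacing every entry of its first row (the row j = 1) by 1. Then S̄(d,p) = −S(d,p). -/
open Finset

section aux

variable {p : ℕ} [Fact p.Prime]

private lemma auxCharNeTwo (hp : 3 < p) : ringChar (ZMod p) ≠ 2 := by
  rw [ZMod.ringChar_zmod_n]; omega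

private lemma auxSumShift (hp : 3 < p) (a : ZMod p) :
    ∑ x : ZMod p, quadraticChar (ZMod p) (x + a) = 0 := by
  rw [Fintype.sum_equiv (Equiv.addRight a) (fun x => quadraticChar (ZMod p) (x + a))
    (fun x => quadraticChar (ZMod p) x) (fun x => rfl)]
  exact quadraticChar_sum_zero (auxCharNeTwo hp)

private lemma auxSumMul (hp : 3 < p) {a : ZMod p} (ha : a ≠ 0) :
    ∑ x : ZMod p, quadraticChar (ZMod p) x * quadraticChar (ZMod p) (x + a) = -1 := by
  set χ := quadraticChar (ZMod p) with hχ
  have hna : (-a) ≠ 0 := neg_ne_zero.2 ha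
  have h1 : ∑ x : ZMod p, χ ((-a) * x) * χ ((-a) * x + a)
      = ∑ x : ZMod p, χ x * χ (x + a) :=
    Fintype.sum_equiv (Equiv.mulLeft₀ (-a) hna)
      (fun x => χ ((-a) * x) * χ ((-a) * x + a)) (fun x => χ x * χ (x + a)) (fun x => rfl)
  rw [← h1]
  have h2 : ∀ x : ZMod p, χ ((-a) * x) * χ ((-a) * x + a)
      = (χ (-1) * χ a * χ a) * (χ x * χ (1 - x)) := by
    intro x
    have he : (-a) * x + a = a * (1 - x) := by ring
    have he2 : (-a) * x = (-1) * a * x := by ring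
    rw [he, he2, map_mul, map_mul, map_mul]
    ring
  simp_rw [h2]
  rw [← Finset.mul_sum]
  have hjs : ∑ x : ZMod p, χ x * χ (1 - x) = -χ (-1) := by
    have hinv : χ⁻¹ = χ := (quadraticChar_isQuadratic (ZMod p)).inv
    have h := jacobiSum_nontrivial_inv (quadraticChar_ne_one (auxCharNeTwo hp))
    rw [hinv] at h
    exact h
  rw [hjs]
  have h3 : χ a * χ a = 1 := by
    have := quadraticChar_sq_one ha; rwa [sq] at this
  have h4 : χ (-1) * χ (-1) = 1 := by
    have := quadraticChar_sq_one (show (-1 : ZMod p) ≠ 0 from neg_ne_zero.2 one_ne_zero)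
    rwa [sq] at this
  linear_combination (-(χ (-1) * χ (-1))) * h3 - h4

private lemma auxSumSq (hp : 3 < p) {a : ZMod p} (ha : a ≠ 0) :
    ∑ x : ZMod p, quadraticChar (ZMod p) (x ^ 2 + a) = -1 := by
  set χ := quadraticChar (ZMod p) with hχ
  have key := Finset.sum_fiberwise' (univ : Finset (ZMod p)) (fun x => x ^ 2)
    (fun y => χ (y + a))
  rw [← key]
  have hcard : ∀ y : ZMod p,
      ((#{x ∈ (univ : Finset (ZMod p)) | x ^ 2 = y} : ℕ) : ℤ) = χ y + 1 := by
    intro y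
    have h := quadraticChar_card_sqrts (auxCharNeTwo hp) y
    rwa [Set.toFinset_setOf] at h
  calc ∑ y : ZMod p, ∑ x ∈ (univ : Finset (ZMod p)) with x ^ 2 = y, χ (y + a)
      = ∑ y : ZMod p, (χ y + 1) * χ (y + a) := by
        refine Finset.sum_congr rfl fun y _ => ?_
        rw [Finset.sum_const, nsmul_eq_mul, hcard y]
    _ = ∑ y : ZMod p, (χ y * χ (y + a) + χ (y + a)) := by
        refine Finset.sum_congr rfl fun y _ => ?_; ring
    _ = (∑ y : ZMod p, χ y * χ (y + a)) + ∑ y : ZMod p, χ (y + a) := by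
        rw [Finset.sum_add_distrib]
    _ = -1 := by rw [auxSumMul hp ha, auxSumShift hp a]; ring

private lemma auxHalf (hp : 3 < p) {a : ZMod p} (ha : a ≠ 0) :
    quadraticChar (ZMod p) a +
      2 * ∑ j : Fin ((p - 1) / 2),
        quadraticChar (ZMod p) ((((j : ℕ) + 1 : ℕ) : ZMod p) ^ 2 + a) = -1 := by
  set χ := quadraticChar (ZMod p) with hχ
  have hodd : p % 2 = 1 := Nat.odd_iff.mp ((Fact.out : p.Prime).odd_of_ne_two (by omega))
  set n := (p - 1) / 2 with hn
  have h2n : 2 * n + 1 = p := by omega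
  -- the gluing map
  set g : Unit ⊕ (Fin n ⊕ Fin n) → ZMod p :=
    Sum.elim (fun _ => 0)
      (Sum.elim (fun j => (((j : ℕ) + 1 : ℕ) : ZMod p))
        (fun j => -(((j : ℕ) + 1 : ℕ) : ZMod p))) with hg
  have hne : ∀ j : Fin n, ((((j : ℕ) + 1 : ℕ)) : ZMod p) ≠ 0 := by
    intro j h
    rw [ZMod.natCast_eq_zero_iff] at h
    have hj := j.isLt
    have := Nat.le_of_dvd (by omega) h
    omega
  have hinj : ∀ j k : Fin n,
      ((((j : ℕ) + 1 : ℕ)) : ZMod p) = ((((k : ℕ) + 1 : ℕ)) : ZMod p) → j = k := by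
    intro j k h
    have hj := j.isLt; have hk := k.isLt
    have h1 : ((((j : ℕ) + 1 : ℕ)) : ZMod p).val = (j : ℕ) + 1 :=
      ZMod.val_cast_of_lt (by omega)
    have h2 : ((((k : ℕ) + 1 : ℕ)) : ZMod p).val = (k : ℕ) + 1 :=
      ZMod.val_cast_of_lt (by omega)
    have := congrArg ZMod.val h
    rw [h1, h2] at this
    exact Fin.ext (by omega)
  have hsum : ∀ j k : Fin n,
      ((((j : ℕ) + 1 : ℕ)) : ZMod p) ≠ -((((k : ℕ) + 1 : ℕ)) : ZMod p) := by
    intro j k h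
    have h0 : ((((j : ℕ) + 1 + ((k : ℕ) + 1) : ℕ)) : ZMod p) = 0 := by
      push_cast
      push_cast at h
      rw [h]; ring
    rw [ZMod.natCast_eq_zero_iff] at h0
    have hj := j.isLt; have hk := k.isLt
    have := Nat.le_of_dvd (by omega) h0
    omega
  have hginj : Function.Injective g := by
    intro x y h
    rcases x with _ | (x | x) <;> rcases y with _ | (y | y) <;>
      simp only [hg, Sum.elim_inl, Sum.elim_inr] at h
    · rfl
    · exact absurd h.symm (hne y)
    · exact absurd (neg_eq_zero.mp h.symm) (hne y)
    · exact absurd h (hne x)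
    · exact congrArg _ (congrArg _ (hinj x y h))
    · exact absurd h (hsum x y)
    · exact absurd (neg_eq_zero.mp h) (hne x)
    · exact absurd h.symm (hsum y x)
    · exact congrArg _ (congrArg _ (hinj x y (neg_injective h)))
  have hcard : Fintype.card (Unit ⊕ (Fin n ⊕ Fin n)) = Fintype.card (ZMod p) := by
    simp only [Fintype.card_sum, Fintype.card_unit, Fintype.card_fin, ZMod.card]
    omega
  have hgbij : Function.Bijective g :=
    (Fintype.bijective_iff_injective_and_card g).mpr ⟨hginj, hcard⟩
  have hb := Fintype.sum_bijective g hgbij (fun i => χ (g i ^ 2 + a))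
    (fun x => χ (x ^ 2 + a)) (fun x => rfl)
  rw [auxSumSq hp ha] at hb
  rw [Fintype.sum_sum_type, Fintype.sum_sum_type] at hb
  simp only [hg, Sum.elim_inl, Sum.elim_inr, neg_sq, Finset.sum_const, Finset.card_univ,
    Fintype.card_unit, one_smul] at hb
  have h0 : (0 : ZMod p) ^ 2 + a = a := by
    rw [zero_pow two_ne_zero, zero_add]
  rw [h0] at hb
  linarith [hb]

private lemma auxCol (hp : 3 < p) (d : ℤ) (hd : legendreSym p d = 1)
    (k : Fin ((p - 1) / 2)) :
    ∑ j : Fin ((p - 1) / 2),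
      legendreSym p ((((j : ℕ) : ℤ) + 1) ^ 2 + d * (((k : ℕ) : ℤ) + 1) ^ 2) = -1 := by
  have hd0 : ((d : ZMod p)) ≠ 0 := by
    intro h
    rw [← legendreSym.eq_zero_iff p d] at h
    omega
  have hk := k.isLt
  have hk0 : ((((k : ℕ) + 1 : ℕ)) : ZMod p) ≠ 0 := by
    intro h
    rw [ZMod.natCast_eq_zero_iff] at h
    have := Nat.le_of_dvd (by omega) h
    omega
  set a : ZMod p := (d : ZMod p) * ((((k : ℕ) + 1 : ℕ)) : ZMod p) ^ 2 with hadef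
  have ha : a ≠ 0 := mul_ne_zero hd0 (pow_ne_zero 2 hk0)
  have hχa : quadraticChar (ZMod p) a = 1 := by
    rw [hadef, map_mul, quadraticChar_sq_one' hk0, mul_one]
    exact hd
  have key := auxHalf hp ha
  rw [hχa] at key
  have hentry : ∀ j : Fin ((p - 1) / 2),
      legendreSym p ((((j : ℕ) : ℤ) + 1) ^ 2 + d * (((k : ℕ) : ℤ) + 1) ^ 2)
        = quadraticChar (ZMod p) ((((j : ℕ) + 1 : ℕ) : ZMod p) ^ 2 + a) := by
    intro j
    show quadraticChar (ZMod p) _ = _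
    congr 1
    rw [hadef]
    push_cast
    ring
  simp_rw [hentry]
  linarith [key]

end aux

/-- For a prime `p > 3` and `d : ℤ` with `(d/p) = 1`, the determinant of the
matrix obtained from `[((j²+dk²)/p)]_{1≤j,k≤(p−1)/2}` by replacing all entries of the first
row by `1` equals `−S(d,p)`. -/
theorem stmt0 (p : ℕ) [Fact p.Prime] (hp : 3 < p) (d : ℤ)
    (hd : legendreSym p d = 1) :
    Matrix.det (Matrix.of fun j k : Fin ((p - 1) / 2) =>
      if (j : ℕ) = 0 then (1 : ℤ)
      else legendreSym p ((((j : ℕ) : ℤ) + 1) ^ 2 + d * (((k : ℕ) : ℤ) + 1) ^ 2)) =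
    - Matrix.det (Matrix.of fun j k : Fin ((p - 1) / 2) =>
      legendreSym p ((((j : ℕ) : ℤ) + 1) ^ 2 + d * (((k : ℕ) : ℤ) + 1) ^ 2)) := by
  haveI : NeZero ((p - 1) / 2) := ⟨by omega⟩
  set n := (p - 1) / 2 with hn
  set M : Matrix (Fin n) (Fin n) ℤ := Matrix.of fun j k : Fin n =>
    legendreSym p ((((j : ℕ) : ℤ) + 1) ^ 2 + d * (((k : ℕ) : ℤ) + 1) ^ 2) with hM
  have hupd : (Matrix.of fun j k : Fin n =>
      if (j : ℕ) = 0 then (1 : ℤ)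
      else legendreSym p ((((j : ℕ) : ℤ) + 1) ^ 2 + d * (((k : ℕ) : ℤ) + 1) ^ 2))
      = M.updateRow 0 (fun _ => 1) := by
    ext j k
    rw [Matrix.of_apply, Matrix.updateRow_apply]
    by_cases h : j = 0
    · simp [h]
    · have h' : (j : ℕ) ≠ 0 := fun hv => h (Fin.ext (by simpa using hv))
      simp [h, h', hM]
  have hones : (fun _ : Fin n => (1 : ℤ)) = ∑ i : Fin n, (fun _ : Fin n => (-1 : ℤ)) i • M i := by
    funext k
    rw [Finset.sum_apply]
    simp only [Pi.smul_apply, smul_eq_mul, neg_one_mul]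
    rw [Finset.sum_neg_distrib]
    have := auxCol hp d hd k
    rw [show ∑ i : Fin n, M i k
        = ∑ j : Fin n, legendreSym p ((((j : ℕ) : ℤ) + 1) ^ 2 + d * (((k : ℕ) : ℤ) + 1) ^ 2)
        from rfl, this]
    norm_num
  rw [hupd, hones, Matrix.det_updateRow_sum]
  simp
end

section
/- Let p > 3 be a prime and let d be an integer. For any integer n with (p−1)/2 < n < p−1, the determinant T_n(d,p) = det[(j²+dk²)^n]_{0≤j,k≤(p−1)/2} satisfies T_n(d,p) ≡ 0 (mod p). -/
/-!
Over `𝔽_p` put `x_j = j²`, so that `x_j ^ ((p + 1) / 2) = x_j`: every power `x_j ^ i` with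
`i ≤ n` equals `x_j ^ e` for some `e ≤ (p - 1) / 2`. Expanding `(x_j + d x_k) ^ n` binomially thus
factors the matrix as `U C V`, with `U`, `V` Vandermonde-type in the `x_j` and `C` collecting the
binomial coefficients. As `n < p - 1`, the rows `0` and `(p - 1) / 2` of `C` each receive a single
term of the expansion, and as `n > (p - 1) / 2` these two terms land in the same column, so
`det C = 0`.
-/

open Finset Matrix

namespace Matrix

variable {R : Type*}

theorem det_eq_zero_of_rows_supported_at_same_col [CommRing R] {n : Type*} [DecidableEq n]
    [Fintype n] (A : Matrix n n R) {i₀ i₁ j₀ : n} (hi : i₀ ≠ i₁)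
    (h₀ : ∀ j ≠ j₀, A i₀ j = 0) (h₁ : ∀ j ≠ j₀, A i₁ j = 0) : A.det = 0 := by
  rw [← det_transpose, det_apply]
  refine sum_eq_zero fun σ _ => ?_
  by_cases hσ : σ i₀ = j₀
  · have hσ₁ : σ i₁ ≠ j₀ := hσ ▸ σ.injective.ne hi.symm
    rw [prod_eq_zero (mem_univ i₁) (h₁ (σ i₁) hσ₁), smul_zero]
  · rw [prod_eq_zero (mem_univ i₀) (h₀ (σ i₀) hσ), smul_zero]

theorem sum_single_apply_eq_zero [AddCommMonoid R] {m n ι : Type*} [DecidableEq m]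
    [DecidableEq n] (s : Finset ι) (g : ι → m) (h : ι → n) (c : ι → R) {a : m} {b b' : n}
    (hgh : ∀ i ∈ s, g i = a → h i = b) (hb : b' ≠ b) :
    (∑ i ∈ s, single (g i) (h i) (c i)) a b' = 0 := by
  rw [sum_apply]
  refine sum_eq_zero fun i hi => single_apply_of_ne _ _ _ _ _ ?_
  rintro ⟨rfl, rfl⟩
  exact hb (hgh i hi rfl)

theorem mul_sum_single_mul [NonUnitalCommSemiring R] {l m n o ι : Type*} [Fintype m] [Fintype n]
    [DecidableEq m] [DecidableEq n] (U : Matrix l m R) (V : Matrix n o R) (s : Finset ι)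
    (g : ι → m) (h : ι → n) (c : ι → R) :
    U * (∑ i ∈ s, single (g i) (h i) (c i)) * V =
      of fun j k => ∑ i ∈ s, U j (g i) * c i * V (h i) k := by
  ext j k
  simp only [Matrix.mul_sum, Matrix.sum_mul, Matrix.sum_apply, of_apply]
  refine sum_congr rfl fun i _ => ?_
  rw [mul_apply, sum_eq_single (h i), mul_single_apply_same]
  · exact fun x _ hx => by rw [mul_single_apply_of_ne _ _ _ _ _ hx, zero_mul]
  · exact fun hi => absurd (mem_univ _) hi

end Matrix

def foldExp (N i : ℕ) : ℕ := if i < N then i else i + 1 - N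

theorem pow_foldExp {M : Type*} [Monoid M] {x : M} {N : ℕ} (hx : x ^ N = x) (i : ℕ) :
    x ^ foldExp N i = x ^ i := by
  unfold foldExp
  split_ifs with hi
  · rfl
  · obtain ⟨t, rfl⟩ := Nat.exists_eq_add_of_le (not_lt.mp hi)
    rw [show N + t + 1 - N = t + 1 by omega, pow_succ', pow_add, hx]

theorem foldExp_lt {N i : ℕ} (h : i + 1 < 2 * N) : foldExp N i < N := by
  unfold foldExp; split_ifs <;> omega

theorem det_of_add_mul_pow_eq_zero {R : Type*} [CommRing R] {N n : ℕ} (hNn : N ≤ n)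
    (hn : n + 2 < 2 * N) (x : Fin N → R) (hx : ∀ j, x j ^ N = x j) (d : R) :
    (of fun j k => (x j + d * x k) ^ n).det = 0 := by
  let g : Fin (n + 1) → Fin N := fun i => ⟨foldExp N i, foldExp_lt (by omega)⟩
  let h : Fin (n + 1) → Fin N := fun i => ⟨foldExp N (n - i), foldExp_lt (by omega)⟩
  let C : Matrix (Fin N) (Fin N) R := ∑ i, single (g i) (h i) (n.choose i * d ^ (n - i))
  have hfactor : of (fun j k => (x j + d * x k) ^ n) =
      of (fun (j a : Fin N) => x j ^ (a : ℕ)) * C * of (fun (b k : Fin N) => x k ^ (b : ℕ)) := by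
    rw [mul_sum_single_mul]
    ext j k
    simp only [of_apply, g, h, pow_foldExp (hx _), add_pow, Fin.sum_univ_eq_sum_range
      (fun i => x j ^ i * (n.choose i * d ^ (n - i)) * x k ^ (n - i))]
    exact sum_congr rfl fun i _ => by ring
  have hC : C.det = 0 := by
    refine det_eq_zero_of_rows_supported_at_same_col C (i₀ := ⟨0, by omega⟩)
      (i₁ := ⟨N - 1, by omega⟩) (j₀ := ⟨n + 1 - N, by omega⟩)
      (by simp only [ne_eq, Fin.ext_iff]; omega) ?_ ?_ <;>
    · intro b hb
      refine sum_single_apply_eq_zero _ _ _ _ (fun i _ hi => ?_) hb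
      simp only [g, h, Fin.ext_iff, foldExp] at hi ⊢
      split_ifs at hi ⊢ <;> omega
  rw [hfactor, det_mul, det_mul, hC, mul_zero, zero_mul]

theorem FiniteField.sq_pow_card_add_one_div_two {K : Type*} [Field K] [Fintype K]
    (hK : Odd (Fintype.card K)) (y : K) : (y ^ 2) ^ ((Fintype.card K + 1) / 2) = y ^ 2 := by
  rw [← pow_mul, show 2 * ((Fintype.card K + 1) / 2) = Fintype.card K + 1 by
    obtain ⟨k, hk⟩ := hK; omega, pow_succ, FiniteField.pow_card, sq]

theorem stmt2_general (p : ℕ) [Fact p.Prime] (d : ℤ) (n : ℕ)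
    (hn1 : (p - 1) / 2 < n) (hn2 : n < p - 1) :
    (p : ℤ) ∣ Matrix.det (Matrix.of fun j k : Fin ((p + 1) / 2) =>
      (((j : ℕ) : ℤ) ^ 2 + d * ((k : ℕ) : ℤ) ^ 2) ^ n) := by
  have hp : Odd p := (Fact.out : p.Prime).odd_of_ne_two (by omega)
  rw [← ZMod.intCast_zmod_eq_zero_iff_dvd, ← eq_intCast (Int.castRingHom (ZMod p)),
    RingHom.map_det]
  have hx (j : Fin ((p + 1) / 2)) :
      (((j : ℕ) : ZMod p) ^ 2) ^ ((p + 1) / 2) = ((j : ℕ) : ZMod p) ^ 2 := by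
    have := FiniteField.sq_pow_card_add_one_div_two (K := ZMod p) (by rwa [ZMod.card]) (j : ℕ)
    rwa [ZMod.card] at this
  convert det_of_add_mul_pow_eq_zero (n := n) (by omega) (by obtain ⟨k, rfl⟩ := hp; omega) _ hx
    (d : ZMod p)
  ext j k
  simp

/-- For a prime `p > 3`, an integer `d`, and any integer `n` with
`(p−1)/2 < n < p−1`, the determinant `T_n(d,p) = det[(j²+dk²)^n]_{0≤j,k≤(p−1)/2}`
is divisible by `p`. -/
theorem stmt2 (p : ℕ) [Fact p.Prime] (hp : 3 < p) (d : ℤ) (n : ℕ)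
    (hn1 : (p - 1) / 2 < n) (hn2 : n < p - 1) :
    (p : ℤ) ∣ Matrix.det (Matrix.of fun j k : Fin ((p + 1) / 2) =>
      (((j : ℕ) : ℤ) ^ 2 + d * ((k : ℕ) : ℤ) ^ 2) ^ n) :=
  stmt2_general p d n hn1 hn2
end

section
/- Let m and n be positive integers with n odd, and let a_0, a_1, …, a_m and b_0, b_1, …, b_m be integers with a_0 + b_0 = 0. Then for every real number x: det[x + tan(π(a_j+b_k)/n)]_{0≤j,k≤m} − det[tan(π(a_j+b_k)/n)]_{0≤j,k≤m} = x · det[tan(π(a_j+b_k)/n)]_{1≤j,k≤m} · ∏_{k=1}^{m} ( tan(π(a_k+b_0)/n) · tan(π(a_0+b_k)/n) ). -/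
/-!
Subtracting row 0 from the other rows and then column 0 from the other columns leaves `x` only
in the `(0, 0)` entry, so `det (x + T) - det T = x * det [T j k - T j 0 - T 0 k + T 0 0]_{j,k ≥ 1}`.
With `α j = π (a j + b 0) / n` and `β k = π (a 0 + b k) / n` we have `α 0 = β 0 = 0` and
`π (a j + b k) / n = α j + β k`, and `tan (α + β) - tan α - tan β = tan (α + β) tan α tan β`
factors that minor as `diag (tan α) * [tan (α j + β k)] * diag (tan β)`. Oddness of `n` keeps all
these angles away from the poles of `tan`.
-/

open Matrix Real

namespace Matrix

variable {R : Type*} [CommRing R] {m : ℕ}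

theorem det_sub_row_zero (A : Matrix (Fin (m + 1)) (Fin (m + 1)) R) :
    det (of fun i j => if i = 0 then A 0 j else A i j - A 0 j) = det A := by
  refine (det_eq_of_forall_row_eq_smul_add_const (fun i => if i = 0 then 0 else 1) 0
    (by simp) fun i j => ?_).symm
  by_cases hi : i = 0 <;> simp [hi]

theorem det_sub_col_zero (A : Matrix (Fin (m + 1)) (Fin (m + 1)) R) :
    det (of fun i j => if j = 0 then A i 0 else A i j - A i 0) = det A := by
  conv_rhs => rw [← det_transpose, ← det_sub_row_zero]
  rw [← det_transpose]
  rfl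

theorem det_add_single_zero_zero (A : Matrix (Fin (m + 1)) (Fin (m + 1)) R) (x : R) :
    det (A + single 0 0 x) = det A + x * det (A.submatrix Fin.succ Fin.succ) := by
  have hminor (j : Fin (m + 1)) :
      (A + single 0 0 x).submatrix Fin.succ j.succAbove = A.submatrix Fin.succ j.succAbove := by
    ext i k
    simp [(Fin.succ_ne_zero i).symm]
  simp only [det_succ_row_zero (A + single 0 0 x), det_succ_row_zero A, hminor, Fin.sum_univ_succ,
    add_apply, single_apply, (Fin.succ_ne_zero _).symm, true_and, ↓reduceIte, Fin.succAbove_zero,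
    Fin.val_succ, Fin.coe_ofNat_eq_mod, Nat.zero_mod, pow_zero, one_mul, add_zero]
  ring

theorem det_const_add (T : Matrix (Fin (m + 1)) (Fin (m + 1)) R) (x : R) :
    det (of fun i j => x + T i j) =
      det T + x * det (of fun i j : Fin m => T i.succ j.succ - T i.succ 0 - T 0 j.succ + T 0 0) := by
  let rowSub (A : Matrix (Fin (m + 1)) (Fin (m + 1)) R) : Matrix (Fin (m + 1)) (Fin (m + 1)) R :=
    of fun i j => if i = 0 then A 0 j else A i j - A 0 j
  let colSub (A : Matrix (Fin (m + 1)) (Fin (m + 1)) R) : Matrix (Fin (m + 1)) (Fin (m + 1)) R :=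
    of fun i j => if j = 0 then A i 0 else A i j - A i 0
  let sweep A := colSub (rowSub A)
  have det_sweep A : det (sweep A) = det A := (det_sub_col_zero _).trans (det_sub_row_zero A)
  have sweep_const_add : sweep (of fun i j => x + T i j) = sweep T + single 0 0 x := by
    ext i j
    by_cases hi : i = 0 <;> by_cases hj : j = 0 <;>
      simp [sweep, rowSub, colSub, hi, hj, eq_comm (a := (0 : Fin (m + 1))), add_comm]
  have sweep_minor : (sweep T).submatrix Fin.succ Fin.succ =
      of fun i j : Fin m => T i.succ j.succ - T i.succ 0 - T 0 j.succ + T 0 0 := by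
    ext i j
    simp only [sweep, rowSub, colSub, of_apply, submatrix_apply, Fin.succ_ne_zero, ↓reduceIte]
    ring
  rw [← det_sweep, sweep_const_add, det_add_single_zero_zero, det_sweep, sweep_minor]

end Matrix

namespace Real

theorem tan_add_sub_tan_sub_tan {α β : ℝ} (hα : cos α ≠ 0) (hβ : cos β ≠ 0)
    (hαβ : cos (α + β) ≠ 0) : tan (α + β) - tan α - tan β = tan (α + β) * tan α * tan β := by
  simp only [tan_eq_sin_div_cos]
  field_simp
  rw [sin_add, cos_add]
  ring

theorem cos_pi_mul_intCast_div_ne_zero {n : ℕ} (hn : Odd n) (c : ℤ) : cos (π * c / n) ≠ 0 := by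
  rw [cos_ne_zero_iff]
  intro k hk
  have hn0 : (n : ℝ) ≠ 0 := by exact_mod_cast hn.pos.ne'
  have hcast : ((2 * c : ℤ) : ℝ) = ((2 * k + 1) * n : ℤ) := by
    field_simp at hk
    push_cast
    nlinarith [pi_pos]
  have hodd : Odd ((2 * k + 1) * n : ℤ) := (odd_two_mul_add_one k).mul (by exact_mod_cast hn)
  exact Int.not_even_iff_odd.2 hodd (Int.cast_injective hcast ▸ even_two_mul c)

end Real

theorem det_const_add_tan_add_sub_det {m : ℕ} (α β : Fin (m + 1) → ℝ) (hα : α 0 = 0)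
    (hβ : β 0 = 0) (hcos : ∀ j k, cos (α j + β k) ≠ 0) (x : ℝ) :
    det (of fun j k => x + tan (α j + β k)) - det (of fun j k => tan (α j + β k)) =
      x * det (of fun j k : Fin m => tan (α j.succ + β k.succ)) *
        ∏ k : Fin m, (tan (α k.succ) * tan (β k.succ)) := by
  have hminor : (of fun j k : Fin m => tan (α j.succ + β k.succ) - tan (α j.succ + β 0) -
        tan (α 0 + β k.succ) + tan (α 0 + β 0)) =
      diagonal (fun j => tan (α j.succ)) * (of fun j k : Fin m => tan (α j.succ + β k.succ)) *
        diagonal (fun k => tan (β k.succ)) := by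
    ext j k
    have hcosα := hcos j.succ 0
    have hcosβ := hcos 0 k.succ
    rw [hβ, add_zero] at hcosα
    rw [hα, zero_add] at hcosβ
    simp only [of_apply, mul_diagonal, diagonal_mul, hα, hβ, add_zero, zero_add, tan_zero]
    linear_combination tan_add_sub_tan_sub_tan hcosα hcosβ (hcos j.succ k.succ)
  have hsplit := det_const_add (of fun j k => tan (α j + β k)) x
  simp only [of_apply] at hsplit
  rw [hsplit, add_sub_cancel_left, hminor, det_mul, det_mul, det_diagonal, det_diagonal,
    Finset.prod_mul_distrib]
  ring

theorem stmt17_general (m n : ℕ) (hodd : Odd n)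
    (a b : Fin (m + 1) → ℤ) (hab : a 0 + b 0 = 0) (x : ℝ) :
    Matrix.det (Matrix.of fun j k : Fin (m + 1) =>
        x + Real.tan (Real.pi * ((a j + b k : ℤ) : ℝ) / n)) -
      Matrix.det (Matrix.of fun j k : Fin (m + 1) =>
        Real.tan (Real.pi * ((a j + b k : ℤ) : ℝ) / n)) =
    x * Matrix.det (Matrix.of fun j k : Fin m =>
        Real.tan (Real.pi * ((a j.succ + b k.succ : ℤ) : ℝ) / n)) *
      ∏ k : Fin m,
        (Real.tan (Real.pi * ((a k.succ + b 0 : ℤ) : ℝ) / n) *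
         Real.tan (Real.pi * ((a 0 + b k.succ : ℤ) : ℝ) / n)) := by
  set α : Fin (m + 1) → ℝ := fun j => π * ((a j + b 0 : ℤ) : ℝ) / n
  set β : Fin (m + 1) → ℝ := fun k => π * ((a 0 + b k : ℤ) : ℝ) / n
  have hangle (j k : Fin (m + 1)) : π * ((a j + b k : ℤ) : ℝ) / n = α j + β k := by
    have hab' : (a 0 : ℝ) + b 0 = 0 := by exact_mod_cast hab
    simp only [α, β]
    push_cast
    linear_combination -π * hab' / n
  have hα : α 0 = 0 := by simp only [α, hab, Int.cast_zero, mul_zero, zero_div]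
  have hβ : β 0 = 0 := by simp only [β, hab, Int.cast_zero, mul_zero, zero_div]
  simp only [hangle, hα, hβ, add_zero, zero_add]
  exact det_const_add_tan_add_sub_det α β hα hβ
    (fun j k => hangle j k ▸ cos_pi_mul_intCast_div_ne_zero hodd _) x

/-- Let `m, n` be positive integers with `n` odd, and `a_0,…,a_m`,
`b_0,…,b_m` integers with `a_0 + b_0 = 0`. Then for every real `x`:
`det[x + tan(π(a_j+b_k)/n)]_{0≤j,k≤m} − det[tan(π(a_j+b_k)/n)]_{0≤j,k≤m}
 = x·det[tan(π(a_j+b_k)/n)]_{1≤j,k≤m}·∏_{k=1}^m tan(π(a_k+b_0)/n)·tan(π(a_0+b_k)/n)`. -/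
theorem stmt17 (m n : ℕ) (hm : 0 < m) (hn : 0 < n) (hodd : Odd n)
    (a b : Fin (m + 1) → ℤ) (hab : a 0 + b 0 = 0) (x : ℝ) :
    Matrix.det (Matrix.of fun j k : Fin (m + 1) =>
        x + Real.tan (Real.pi * ((a j + b k : ℤ) : ℝ) / n)) -
      Matrix.det (Matrix.of fun j k : Fin (m + 1) =>
        Real.tan (Real.pi * ((a j + b k : ℤ) : ℝ) / n)) =
    x * Matrix.det (Matrix.of fun j k : Fin m =>
        Real.tan (Real.pi * ((a j.succ + b k.succ : ℤ) : ℝ) / n)) *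
      ∏ k : Fin m,
        (Real.tan (Real.pi * ((a k.succ + b 0 : ℤ) : ℝ) / n) *
         Real.tan (Real.pi * ((a 0 + b k.succ : ℤ) : ℝ) / n)) :=
  stmt17_general m n hodd a b hab x
end

section
/- Let p be an odd prime and let d be an integer with Legendre symbol (d/p) = 1. Then for every real number x: det[x + ((j²+dk²)/p)]_{1≤j,k≤(p−1)/2} = (1 − ((p−1)/2)·x)·S(d,p), and det[x + ((j²+dk²)/p)]_{0≤j,k≤(p−1)/2} = (p·x + (p−1)/2)·S(d,p), where in each determinant the (j,k) entry is the real number x plus the Legendre symbol ((j²+dk²)/p). -/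
/-!
Let `A` be the matrix whose determinant is `S(d,p)`. Every column of `A` sums to `-1`: column `k`
is `∑_{j=1}^{(p-1)/2} ((j² + c)/p)` with `c = dk²` a nonzero square, and since `z ↦ z²` is
two-to-one on `(ℤ/p)ˣ` this is half of `∑_{z ≠ 0} ((z² + c)/p) = -1 - (c/p) = -2`, using the
Jacobsthal-type sum `∑_z ((z² + c)/p) = -1`. Hence `(-1, …, -1) A = (1, …, 1)`, so
`(1 - x 𝟙𝟙ᵀ) A = A + x 𝟙𝟙ᵀ`, and the first formula follows from `det (1 + u vᵀ) = 1 + vᵀu`.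
For the matrix indexed from `0`, subtracting `1` from every entry kills the border row and column
(`(0/p) = 0`, `(j²/p) = (dk²/p) = 1`) and leaves `-1 ⊕ (A - 𝟙𝟙ᵀ)`; for this matrix `C` a vector
`w` with `wᵀC = 𝟙ᵀ` is again explicit, so the same rank-one argument applies with `x + 1` for `x`.
-/

open Finset

namespace Matrix

variable {ι R : Type*} [Fintype ι] [DecidableEq ι]

theorem det_const_add_of_vecMul_eq_one [CommRing R] {B : Matrix ι ι R} {w : ι → R}
    (h : w ᵥ* B = 1) (x : R) :
    (of fun i j => x + B i j).det = (1 + x * ∑ i, w i) * B.det := by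
  have hfactor : (of fun i j => x + B i j) =
      (1 + replicateCol Unit (fun _ => x) * replicateRow Unit w) * B := by
    rw [add_mul, one_mul, Matrix.mul_assoc, ← replicateRow_vecMul, h]
    ext i j
    simp [mul_apply, add_comm]
  rw [hfactor, det_mul, det_one_add_replicateCol_mul_replicateRow, dotProduct, mul_sum]
  simp_rw [mul_comm x]

theorem det_const_add_of_sum_col_eq_neg_one [CommRing R] {B : Matrix ι ι R}
    (h : ∀ j, ∑ i, B i j = -1) (x : R) :
    (of fun i j => x + B i j).det = (1 - Fintype.card ι * x) * B.det := by
  have hw : (-1 : ι → R) ᵥ* B = 1 := by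
    ext j
    simp [vecMul, dotProduct, h]
  rw [det_const_add_of_vecMul_eq_one hw]
  simp only [Pi.neg_apply, Pi.one_apply, sum_neg_distrib, sum_const, card_univ, nsmul_one]
  ring

theorem det_succ_of_row_zero {n : ℕ} [CommRing R] {M : Matrix (Fin (n + 1)) (Fin (n + 1)) R}
    (h : ∀ k : Fin n, M 0 k.succ = 0) : M.det = M 0 0 * (M.submatrix Fin.succ Fin.succ).det := by
  simp [det_succ_row_zero, Fin.sum_univ_succ, h]

theorem det_const_add_bordered [Field R] {n : ℕ} {M : Matrix (Fin (n + 1)) (Fin (n + 1)) R}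
    (h00 : M 0 0 = 0) (hrow : ∀ k : Fin n, M 0 k.succ = 1) (hcol : ∀ j : Fin n, M j.succ 0 = 1)
    (hsum : ∀ k : Fin n, ∑ j : Fin n, M j.succ k.succ = -1) (hn : (n + 1 : R) ≠ 0) (x : R) :
    (of fun i j => x + M i j).det =
      ((2 * n + 1) * x + n) * (M.submatrix Fin.succ Fin.succ).det := by
  set C : Matrix (Fin (n + 1)) (Fin (n + 1)) R := of fun i j => -1 + M i j
  have hC : C.det = -((1 + n) * (M.submatrix Fin.succ Fin.succ).det) := by
    rw [det_succ_of_row_zero (by simp [C, hrow])]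
    have hsub : C.submatrix Fin.succ Fin.succ =
        of fun i j => -1 + M.submatrix Fin.succ Fin.succ i j := rfl
    rw [hsub, det_const_add_of_sum_col_eq_neg_one (B := M.submatrix Fin.succ Fin.succ) hsum]
    simp [C, h00]
  set w : Fin (n + 1) → R := Fin.cons (-1) fun _ => -(n + 1 : R)⁻¹
  have hw : w ᵥ* C = 1 := by
    ext k
    induction k using Fin.cases with
    | zero => simp [w, C, vecMul, dotProduct, Fin.sum_univ_succ, h00, hcol]
    | succ k =>
      simp only [vecMul, dotProduct, of_apply, mul_add, mul_neg, mul_one, sum_add_distrib,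
        sum_neg_distrib, Fin.sum_univ_succ, Fin.cons_zero, Fin.cons_succ, sum_const, card_univ,
        Fintype.card_fin, nsmul_eq_mul, neg_add_rev, neg_neg, hrow, neg_mul, ← mul_sum, hsum,
        add_add_neg_add_cancel, Pi.one_apply, w, C]
      field_simp
  calc (of fun i j => x + M i j).det = (of fun i j => (x + 1) + C i j).det := by
        congr 1; ext i j; simp [C]
    _ = ((2 * n + 1) * x + n) * (M.submatrix Fin.succ Fin.succ).det := by
        rw [det_const_add_of_vecMul_eq_one hw, hC]
        simp only [Fin.sum_univ_succ, Fin.cons_zero, Fin.cons_succ, sum_neg_distrib, sum_const,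
          card_univ, Fintype.card_fin, nsmul_eq_mul, mul_neg, w]
        field_simp
        ring

end Matrix

section QuadraticChar

variable {F : Type*} [Field F] [Fintype F] [DecidableEq F]

theorem sum_comp_sq_eq_sum_quadraticChar_add_one (hF : ringChar F ≠ 2)
    {M : Type*} [AddCommGroup M] (f : F → M) :
    ∑ z, f (z ^ 2) = ∑ u, (quadraticChar F u + 1) • f u := by
  rw [← sum_fiberwise univ (· ^ 2)]
  refine sum_congr rfl fun u _ => ?_
  rw [sum_congr rfl fun z hz => congrArg f (mem_filter.mp hz).2, sum_const,
    ← quadraticChar_card_sqrts hF u, Set.toFinset_ofPred, natCast_zsmul]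

theorem quadraticChar_sum_mul_add (hF : ringChar F ≠ 2) {c : F} (hc : c ≠ 0) :
    ∑ u, quadraticChar F u * quadraticChar F (u + c) = -1 := by
  set χ := quadraticChar F
  have hinv (u : F) : χ u = χ u⁻¹ := by
    rw [← MulChar.inv_apply', (quadraticChar_isQuadratic F).inv]
  have hshift : ∑ w, χ (1 + c * w) = 0 := by
    rw [← quadraticChar_sum_zero hF]
    exact Fintype.sum_equiv ((Equiv.mulLeft₀ c hc).trans (Equiv.addLeft 1)) _ _ fun _ => rfl
  -- `w * (w⁻¹ + c) = 1 + c * w` except at `w = 0`, where `0⁻¹ = 0`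
  calc ∑ u, χ u * χ (u + c) = ∑ u, χ (u⁻¹ * (u + c)) := by simp_rw [map_mul, ← hinv]
    _ = ∑ w, χ (w * (w⁻¹ + c)) := Fintype.sum_equiv (Equiv.inv F) _ _ fun u => by simp
    _ = ∑ w, χ (1 + c * w) - χ 1 := by
      rw [eq_sub_iff_add_eq, ← add_sum_erase univ _ (mem_univ 0),
        ← add_sum_erase univ _ (mem_univ 0)]
      simp only [zero_mul, MulChar.map_zero, mul_zero, add_zero, zero_add, add_comm (χ 1)]
      congr 1
      refine sum_congr rfl fun w hw => ?_
      rw [mul_add, mul_inv_cancel₀ (ne_of_mem_erase hw), mul_comm]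
    _ = -1 := by rw [hshift, map_one, zero_sub]

theorem quadraticChar_sum_sq_add (hF : ringChar F ≠ 2) {c : F} (hc : c ≠ 0) :
    ∑ z, quadraticChar F (z ^ 2 + c) = -1 := by
  have hshift : ∑ u, quadraticChar F (u + c) = 0 := by
    rw [← quadraticChar_sum_zero hF]
    exact Fintype.sum_equiv (Equiv.addRight c) _ _ fun _ => rfl
  rw [sum_comp_sq_eq_sum_quadraticChar_add_one hF (fun u => quadraticChar F (u + c))]
  simp only [smul_eq_mul, add_mul, one_mul, sum_add_distrib, hshift,
    quadraticChar_sum_mul_add hF hc, add_zero]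

end QuadraticChar

theorem ZMod.sum_eq_add_two_nsmul_sum_of_even {n : ℕ} {M : Type*} [AddCommMonoid M]
    (g : ZMod (2 * n + 1) → M) (hg : ∀ z, g (-z) = g z) :
    ∑ z, g z = g 0 + 2 • ∑ j : Fin n, g ((j : ℕ) + 1) := by
  have hneg : ∀ i < n, g ((n + (n - 1 - i) + 1 : ℕ) : ZMod (2 * n + 1)) = g ((i : ℕ) + 1) := by
    intro i hi
    rw [← hg]
    congr 1
    rw [neg_eq_iff_add_eq_zero, ← ZMod.natCast_self (2 * n + 1),
      show 2 * n + 1 = (n + (n - 1 - i) + 1) + i + 1 by omega]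
    push_cast
    ring
  have hrange : range (2 * n) = range (n + n) := by rw [two_mul]
  calc ∑ z, g z = ∑ i : Fin (2 * n + 1), g ((i : ℕ) : ZMod (2 * n + 1)) :=
        sum_congr rfl fun z _ => congrArg g (ZMod.natCast_zmod_val z).symm
    _ = ∑ i ∈ range (2 * n + 1), g i := Fin.sum_univ_eq_sum_range (fun i => g i) _
    _ = g 0 + (∑ i ∈ range n, g ((i : ℕ) + 1) + ∑ i ∈ range n, g ((n + i + 1 : ℕ))) := by
        rw [sum_range_succ', add_comm, hrange, sum_range_add]
        push_cast
        rfl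
    _ = g 0 + 2 • ∑ j : Fin n, g ((j : ℕ) + 1) := by
        rw [← sum_range_reflect (fun i => g ((n + i + 1 : ℕ) : ZMod _)) n,
          sum_congr rfl fun i hi => hneg i (mem_range.mp hi),
          Fin.sum_univ_eq_sum_range (fun i => g ((i : ℕ) + 1)), two_nsmul]

section Legendre

variable {p : ℕ} [Fact p.Prime]

theorem legendreSym_natCast_add_one_sq {m : ℕ} (hm : m + 1 < p) :
    legendreSym p (((m : ℤ) + 1) ^ 2) = 1 := by
  refine legendreSym.sq_one' p ?_
  rw [← Nat.cast_succ, Int.cast_natCast, Ne, ZMod.natCast_eq_zero_iff]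
  exact Nat.not_dvd_of_pos_of_lt m.succ_pos hm

theorem legendreSym_sum_sq_add {n : ℕ} (hp : p = 2 * n + 1) {c : ℤ} (hc : legendreSym p c = 1) :
    ∑ j : Fin n, legendreSym p ((((j : ℕ) : ℤ) + 1) ^ 2 + c) = -1 := by
  subst hp
  have hF : ringChar (ZMod (2 * n + 1)) ≠ 2 := by
    rw [ZMod.ringChar_zmod_n]
    omega
  have hc0 : (c : ZMod (2 * n + 1)) ≠ 0 := fun h => by simp [legendreSym, h] at hc
  have h := quadraticChar_sum_sq_add hF hc0
  rw [ZMod.sum_eq_add_two_nsmul_sum_of_even _ fun z => by rw [neg_sq], zero_pow two_ne_zero,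
    zero_add, show quadraticChar _ (c : ZMod (2 * n + 1)) = 1 from hc, nsmul_eq_mul, Nat.cast_two] at h
  have hterm (j : Fin n) : legendreSym (2 * n + 1) ((((j : ℕ) : ℤ) + 1) ^ 2 + c) =
      quadraticChar (ZMod (2 * n + 1)) ((((j : ℕ) : ZMod (2 * n + 1)) + 1) ^ 2 + c) := by
    simp [legendreSym]
  rw [sum_congr rfl fun j _ => hterm j]
  omega

theorem sum_legendreSym_sq_add_mul_sq {n : ℕ} (hp : p = 2 * n + 1) {d : ℤ}
    (hd : legendreSym p d = 1) (k : Fin n) :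
    ∑ j : Fin n, (legendreSym p ((((j : ℕ) : ℤ) + 1) ^ 2 + d * (((k : ℕ) : ℤ) + 1) ^ 2) : ℝ) =
      -1 := by
  have hc : legendreSym p (d * (((k : ℕ) : ℤ) + 1) ^ 2) = 1 := by
    rw [legendreSym.mul, hd, one_mul, legendreSym_natCast_add_one_sq (by omega)]
  exact_mod_cast legendreSym_sum_sq_add hp hc

end Legendre

/-- For an odd prime `p`, `d : ℤ` with `(d/p) = 1`, and every real `x`:
`det[x + ((j²+dk²)/p)]_{1≤j,k≤(p−1)/2} = (1 − ((p−1)/2)·x)·S(d,p)` and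
`det[x + ((j²+dk²)/p)]_{0≤j,k≤(p−1)/2} = (p·x + (p−1)/2)·S(d,p)`. -/
theorem stmt18 (p : ℕ) [Fact p.Prime] (hp2 : p ≠ 2) (d : ℤ)
    (hd : legendreSym p d = 1) (x : ℝ) :
    Matrix.det (Matrix.of fun j k : Fin ((p - 1) / 2) =>
        x + (legendreSym p ((((j : ℕ) : ℤ) + 1) ^ 2 + d * (((k : ℕ) : ℤ) + 1) ^ 2) : ℝ)) =
      (1 - (((p - 1) / 2 : ℕ) : ℝ) * x) *
        (Matrix.det (Matrix.of fun j k : Fin ((p - 1) / 2) =>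
          (legendreSym p ((((j : ℕ) : ℤ) + 1) ^ 2 + d * (((k : ℕ) : ℤ) + 1) ^ 2) : ℤ)) : ℝ) ∧
    Matrix.det (Matrix.of fun j k : Fin ((p + 1) / 2) =>
        x + (legendreSym p (((j : ℕ) : ℤ) ^ 2 + d * ((k : ℕ) : ℤ) ^ 2) : ℝ)) =
      ((p : ℝ) * x + (((p - 1) / 2 : ℕ) : ℝ)) *
        (Matrix.det (Matrix.of fun j k : Fin ((p - 1) / 2) =>
          (legendreSym p ((((j : ℕ) : ℤ) + 1) ^ 2 + d * (((k : ℕ) : ℤ) + 1) ^ 2) : ℤ)) : ℝ) := by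
  obtain ⟨n, hp⟩ : ∃ n, p = 2 * n + 1 :=
    ⟨(p - 1) / 2, by have := (Fact.out : p.Prime).eq_two_or_odd; omega⟩
  rw [show (p - 1) / 2 = n by omega, show (p + 1) / 2 = n + 1 by omega]
  have hsum := sum_legendreSym_sq_add_mul_sq hp hd
  have hsq (m : ℕ) (hm : m < n) : legendreSym p (((m : ℤ) + 1) ^ 2) = 1 :=
    legendreSym_natCast_add_one_sq (by omega)
  refine ⟨?_, ?_⟩
  · rw [Matrix.det_const_add_of_sum_col_eq_neg_one hsum x, Fintype.card_fin]
    rfl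
  · refine (Matrix.det_const_add_bordered (M := Matrix.of fun j k : Fin (n + 1) =>
        (legendreSym p (((j : ℕ) : ℤ) ^ 2 + d * ((k : ℕ) : ℤ) ^ 2) : ℝ))
      (by simp [legendreSym.at_zero]) (fun k => ?_) (fun j => ?_) (fun k => by simpa using hsum k)
      (by positivity) x).trans ?_
    · simp [legendreSym.mul, hd, hsq]
    · simp [hsq]
    · congr 1
      simp [hp]
end

section
/- Let p be an odd prime and let d be an integer with Legendre symbol (d/p) = −1. Then for every real number x: det[x + ((j²+dk²)/p)]_{0≤j,k≤(p−1)/2} = T(d,p), and det[x + ((j²+dk²)/p)]_{1≤j,k≤(p−1)/2} = x·T(d,p), where in each determinant the (j,k) entry is the real number x plus the Legendre symbol ((j²+dk²)/p). -/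
open Finset Matrix

lemma genSum (p : ℕ) [Fact p.Prime] (hp2 : p ≠ 2) (a b : ZMod p) (ha : a ≠ 0) (hb : b ≠ 0) :
    ∑ y : ZMod p, quadraticChar (ZMod p) (b + a * y ^ 2)
      = - quadraticChar (ZMod p) a := by
  have hF : ringChar (ZMod p) ≠ 2 := by
    rw [ZMod.ringChar_zmod_n]; exact hp2
  set χ := quadraticChar (ZMod p) with hχ
  -- step 1 : fiber count
  have step1 : ∑ y : ZMod p, χ (b + a * y ^ 2)
      = ∑ z : ZMod p, ((χ z + 1) * χ (b + a * z)) := by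
    have hcomp := Finset.sum_comp (fun z : ZMod p => χ (b + a * z)) (fun y : ZMod p => y ^ 2)
      (s := Finset.univ)
    rw [hcomp]
    rw [Finset.sum_subset (Finset.subset_univ (Finset.univ.image (fun y : ZMod p => y ^ 2)))]
    · apply Finset.sum_congr rfl
      intro z _
      have hcard : ((Finset.univ.filter fun y : ZMod p => y ^ 2 = z).card : ℤ) = χ z + 1 := by
        have := quadraticChar_card_sqrts hF z
        rwa [Set.toFinset_setOf] at this
      rw [nsmul_eq_mul, hcard]
    · intro z _ hz
      have : (Finset.univ.filter fun y : ZMod p => y ^ 2 = z) = ∅ := by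
        rw [Finset.filter_eq_empty_iff]
        intro y _
        intro hy
        exact hz (Finset.mem_image.mpr ⟨y, Finset.mem_univ y, hy⟩)
      simp [this]
  -- step 2 : ∑ z, χ (b + a * z) = 0
  have step2 : ∑ z : ZMod p, χ (b + a * z) = 0 := by
    have e : ZMod p ≃ ZMod p := (Equiv.mulLeft₀ a ha).trans (Equiv.addLeft b)
    have : ∑ z : ZMod p, χ (b + a * z) = ∑ w : ZMod p, χ w :=
      Equiv.sum_comp ((Equiv.mulLeft₀ a ha).trans (Equiv.addLeft b)) χ
    rw [this, hχ]
    exact quadraticChar_sum_zero hF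
  -- step 3
  have step3 : ∑ z : ZMod p, χ z * χ (b + a * z) = - χ a := by
    have hmul : ∀ z : ZMod p, χ z * χ (b + a * z) = χ (z * (b + a * z)) := by
      intro z; rw [_root_.map_mul]
    rw [Finset.sum_congr rfl fun z _ => hmul z]
    rw [← Finset.sum_erase_add _ _ (Finset.mem_univ (0 : ZMod p))]
    have h0 : χ (0 * (b + a * 0)) = 0 := by
      rw [hχ]; simp
    rw [h0, add_zero]
    have hterm : ∀ z ∈ Finset.univ.erase (0 : ZMod p),
        χ (z * (b + a * z)) = χ (a + b * z⁻¹) := by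
      intro z hz
      have hz0 : z ≠ 0 := (Finset.mem_erase.mp hz).1
      have : z * (b + a * z) = z ^ 2 * (a + b * z⁻¹) := by
        field_simp
        ring
      rw [this, _root_.map_mul, quadraticChar_sq_one' hz0, one_mul]
    rw [Finset.sum_congr rfl hterm]
    have hinv : ∑ z ∈ Finset.univ.erase (0 : ZMod p), χ (a + b * z⁻¹)
        = ∑ u ∈ Finset.univ.erase (0 : ZMod p), χ (a + b * u) := by
      apply Finset.sum_nbij' (i := fun z => z⁻¹) (j := fun u => u⁻¹)
      · intro z hz
        simp only [Finset.mem_erase, Finset.mem_univ, and_true] at *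
        exact inv_ne_zero hz
      · intro u hu
        simp only [Finset.mem_erase, Finset.mem_univ, and_true] at *
        exact inv_ne_zero hu
      · intro z _; exact inv_inv z
      · intro u _; exact inv_inv u
      · intro z _; rfl
    rw [hinv]
    rw [Finset.sum_erase_eq_sub (Finset.mem_univ (0 : ZMod p))]
    have : ∑ u : ZMod p, χ (a + b * u) = 0 := by
      have := Equiv.sum_comp ((Equiv.mulLeft₀ b hb).trans (Equiv.addLeft a)) χ
      rw [show ∑ u : ZMod p, χ (a + b * u)
          = ∑ u : ZMod p, χ (((Equiv.mulLeft₀ b hb).trans (Equiv.addLeft a)) u) from rfl, this, hχ]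
      exact quadraticChar_sum_zero hF
    rw [this]
    simp
  rw [step1]
  have : ∀ z : ZMod p, (χ z + 1) * χ (b + a * z)
      = χ z * χ (b + a * z) + χ (b + a * z) := by intro z; ring
  rw [Finset.sum_congr rfl fun z _ => this z, Finset.sum_add_distrib, step2, step3, add_zero]

lemma halfsum (p m : ℕ) [Fact p.Prime] (hp2 : p ≠ 2) (hp : p = 2 * m + 1) (d : ℤ)
    (hd : legendreSym p d = -1) (c : ℤ) (hc : ((c : ℤ) : ZMod p) ≠ 0) :
    ∑ k : Fin m, legendreSym p (c ^ 2 + d * ((k : ℕ) + 1 : ℤ) ^ 2) = 0 := by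
  haveI : NeZero p := ⟨by omega⟩
  set g : ZMod p → ℤ :=
    fun y => quadraticChar (ZMod p) ((c : ZMod p) ^ 2 + (d : ZMod p) * y ^ 2) with hg
  have hdz : ((d : ℤ) : ZMod p) ≠ 0 := by
    intro h
    rw [(legendreSym.eq_zero_iff p d).mpr h] at hd
    norm_num at hd
  -- total sum
  have htot : ∑ y : ZMod p, g y = 1 := by
    have h := genSum p hp2 ((d : ℤ) : ZMod p) ((c : ZMod p) ^ 2) hdz (pow_ne_zero 2 hc)
    have hgd : quadraticChar (ZMod p) ((d : ℤ) : ZMod p) = -1 := hd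
    rw [show ∑ y : ZMod p, g y
        = ∑ y : ZMod p, quadraticChar (ZMod p) ((c : ZMod p) ^ 2 + ((d : ℤ) : ZMod p) * y ^ 2)
        from rfl, h, hgd]
    norm_num
  -- sum over ZMod p = sum over range p
  have h1 : ∑ y : ZMod p, g y = ∑ i ∈ Finset.range p, g (i : ZMod p) := by
    refine Finset.sum_nbij' (fun y : ZMod p => y.val) (fun i : ℕ => (i : ZMod p))
      ?_ ?_ ?_ ?_ ?_
    · intro y _; exact Finset.mem_range.mpr (ZMod.val_lt y)
    · intro i _; exact Finset.mem_univ _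
    · intro y _; exact ZMod.natCast_rightInverse y
    · intro i hi; exact ZMod.val_cast_of_lt (Finset.mem_range.mp hi)
    · intro y _; rw [ZMod.natCast_rightInverse y]
  -- even function
  have heven : ∀ i : ℕ, i < m → g ((m + 1 + i : ℕ) : ZMod p) = g ((m - i : ℕ) : ZMod p) := by
    intro i hi
    have hsum : ((m + 1 + i : ℕ) : ZMod p) + ((m - i : ℕ) : ZMod p) = 0 := by
      rw [← Nat.cast_add]
      have : m + 1 + i + (m - i) = p := by omega
      rw [this, ZMod.natCast_self]
    have : ((m + 1 + i : ℕ) : ZMod p) = -((m - i : ℕ) : ZMod p) := by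
      linear_combination hsum
    rw [this]
    simp only [hg]
    congr 1
    ring
  -- fold
  have h2 : ∑ i ∈ Finset.range p, g (i : ZMod p)
      = g 0 + 2 * ∑ i ∈ Finset.range m, g ((i + 1 : ℕ) : ZMod p) := by
    have hadd := Finset.sum_range_add (fun i : ℕ => g (i : ZMod p)) (m + 1) m
    rw [show m + 1 + m = p by omega] at hadd
    rw [hadd]
    have ha : ∑ i ∈ Finset.range (m + 1), g ((i : ℕ) : ZMod p)
        = ∑ i ∈ Finset.range m, g ((i + 1 : ℕ) : ZMod p) + g ((0 : ℕ) : ZMod p) :=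
      Finset.sum_range_succ' _ m
    have hb : ∑ i ∈ Finset.range m, g ((m + 1 + i : ℕ) : ZMod p)
        = ∑ i ∈ Finset.range m, g ((i + 1 : ℕ) : ZMod p) := by
      rw [Finset.sum_congr rfl (fun i hi => heven i (Finset.mem_range.mp hi))]
      have := Finset.sum_range_reflect (fun i => g ((i + 1 : ℕ) : ZMod p)) m
      rw [← this]
      apply Finset.sum_congr rfl
      intro i hi
      have : m - 1 - i + 1 = m - i := by
        have := Finset.mem_range.mp hi; omega
      rw [this]
    rw [ha, hb]
    push_cast
    ring
  -- g 0 = 1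
  have hg0 : g 0 = 1 := by
    rw [hg]
    simp only [ne_eq, zero_pow, mul_zero, add_zero]
    have : (0 : ZMod p) ^ 2 = 0 := by norm_num
    rw [this, mul_zero, add_zero]
    exact quadraticChar_sq_one' hc
  -- conclude about the range sum
  have hS : ∑ i ∈ Finset.range m, g ((i + 1 : ℕ) : ZMod p) = 0 := by
    have := htot
    rw [h1, h2, hg0] at this
    linarith
  -- translate
  have hterm : ∀ k : Fin m,
      legendreSym p (c ^ 2 + d * ((k : ℕ) + 1 : ℤ) ^ 2) = g (((k : ℕ) + 1 : ℕ) : ZMod p) := by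
    intro k
    show quadraticChar (ZMod p) ((c ^ 2 + d * ((k : ℕ) + 1 : ℤ) ^ 2 : ℤ) : ZMod p) = _
    rw [hg]
    push_cast
    ring_nf
  rw [Finset.sum_congr rfl (fun k _ => hterm k)]
  rw [Fin.sum_univ_eq_sum_range (fun i => g ((i + 1 : ℕ) : ZMod p)) m]
  exact hS

lemma detkey (m : ℕ) (hm : 1 ≤ m) (M : Matrix (Fin (m+1)) (Fin (m+1)) ℝ)
    (h00 : M 0 0 = 0)
    (hr0 : ∀ k : Fin m, M 0 k.succ = -1)
    (hc0 : ∀ j : Fin m, M j.succ 0 = 1)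
    (hsum0 : ∑ k : Fin m, M 0 k.succ = -(m:ℝ))
    (hsum : ∀ j : Fin m, ∑ k : Fin m, M j.succ k.succ = 0) :
    (∀ x : ℝ, Matrix.det (Matrix.of fun j k => x + M j k) = Matrix.det M) ∧
    (∀ x : ℝ, Matrix.det (Matrix.of fun j k : Fin m => x + M j.succ k.succ)
      = x * Matrix.det M) := by
  haveI : NeZero m := ⟨by omega⟩
  have hmR : (m : ℝ) ≠ 0 := by positivity
  set A : ℝ → Matrix (Fin (m+1)) (Fin (m+1)) ℝ := fun x => Matrix.of fun j k => x + M j k with hA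
  -- Step A : det (A x) = det (updateColumn (A x) 0 (fun _ => 1))
  have stepA : ∀ x : ℝ, (A x).det = ((A x).updateCol 0 (fun _ => 1)).det := by
    intro x
    have h := Matrix.det_updateCol_sum (A x) 0
      (fun k => if k = 0 then (1:ℝ) else -(1/m))
    have hv : (fun j => ∑ i, (if i = 0 then (1:ℝ) else -(1/m)) • (A x) j i)
        = fun _ => (1:ℝ) := by
      funext j
      have hterm : ∀ i : Fin m, (if i.succ = 0 then (1:ℝ) else -(1/m)) • (A x) j i.succ
          = -(1/m) * (x + M j i.succ) := by
        intro i
        rw [if_neg (Fin.succ_ne_zero i)]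
        simp [hA]
      have hhead : (if (0 : Fin (m+1)) = 0 then (1:ℝ) else -(1/m)) • (A x) j 0
          = x + M j 0 := by simp [hA]
      have hsx : ∑ i : Fin m, (x + M j i.succ) = m * x + ∑ i : Fin m, M j i.succ := by
        rw [Finset.sum_add_distrib]
        simp [mul_comm]
      rw [Fin.sum_univ_succ, hhead, Finset.sum_congr rfl fun i _ => hterm i,
        ← Finset.mul_sum, hsx]
      rcases Fin.eq_zero_or_eq_succ j with hj | ⟨j', rfl⟩
      · subst hj
        rw [hsum0]
        simp only [hA, Matrix.of_apply, h00]
        field_simp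
        ring
      · rw [hsum j']
        simp only [hA, Matrix.of_apply, hc0 j']
        field_simp
        ring
    rw [hv] at h
    rw [if_pos rfl, smul_eq_mul, one_mul] at h
    exact h.symm
  -- Step B : det (updateColumn (A x) 0 1) = det (updateColumn (A 0) 0 1)
  have stepB : ∀ x : ℝ, ((A x).updateCol 0 (fun _ => 1)).det
      = ((A 0).updateCol 0 (fun _ => 1)).det := by
    intro x
    rw [← Matrix.det_transpose (((A x).updateCol 0 (fun _ => 1))),
        ← Matrix.det_transpose (((A 0).updateCol 0 (fun _ => 1)))]
    apply Matrix.det_eq_of_forall_row_eq_smul_add_const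
      (c := fun k => if k = 0 then 0 else x) (k := 0) (by simp)
    intro i j
    rcases Fin.eq_zero_or_eq_succ i with hi | ⟨i', rfl⟩
    · subst hi; simp [Matrix.updateCol_self]
    · simp only [Matrix.transpose_apply, Matrix.updateCol_ne (Fin.succ_ne_zero i'),
        Matrix.updateCol_self, if_neg (Fin.succ_ne_zero i'), hA, Matrix.of_apply]
      ring
  have hA0 : A 0 = M := by ext j k; simp [hA]
  have part1 : ∀ x : ℝ, (A x).det = M.det := by
    intro x
    rw [stepA x, stepB x, ← stepA 0, hA0]
  -- the small matrices
  set Q : ℝ → Matrix (Fin m) (Fin m) ℝ :=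
    fun x => Matrix.of fun j k : Fin m => x + M j.succ k.succ with hQ
  -- Step C : det M = det (Q 1)
  set N : Matrix (Fin (m+1)) (Fin (m+1)) ℝ := M.updateCol 0 (fun _ => 1) with hN
  have stepC1 : M.det = N.det := by
    have := stepA 0
    rw [hA0] at this
    exact this
  set P : Matrix (Fin (m+1)) (Fin (m+1)) ℝ :=
    Matrix.of (fun j k => if j = 0 then N 0 k else N j k - N 0 k) with hP
  have stepC2 : N.det = P.det := by
    apply Matrix.det_eq_of_forall_row_eq_smul_add_const
      (c := fun j => if j = 0 then 0 else 1) (k := 0) (by simp)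
    intro i j
    rcases Fin.eq_zero_or_eq_succ i with hi | ⟨i', rfl⟩
    · subst hi; simp [hP]
    · simp only [hP, Matrix.of_apply, if_neg (Fin.succ_ne_zero i')]
      simp
  have stepC3 : P.det = (Q 1).det := by
    rw [Matrix.det_succ_column_zero]
    have hP0 : ∀ i : Fin m, P i.succ 0 = 0 := by
      intro i
      simp only [hP, Matrix.of_apply, if_neg (Fin.succ_ne_zero i), hN,
        Matrix.updateCol_self, sub_self]
    rw [Fin.sum_univ_succ]
    have hzero : ∀ i : Fin m,
        (-1 : ℝ) ^ ((i.succ : ℕ)) * P i.succ 0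
          * (P.submatrix i.succ.succAbove Fin.succ).det = 0 := by
      intro i; rw [hP0 i]; ring
    rw [Finset.sum_congr rfl fun i _ => hzero i]
    simp only [Finset.sum_const, smul_zero, add_zero]
    have hP00 : P 0 0 = 1 := by simp [hP, hN]
    rw [hP00]
    have hsub : P.submatrix (Fin.succAbove 0) Fin.succ = Q 1 := by
      ext j k
      simp only [Matrix.submatrix_apply, Fin.succAbove_zero, hP, Matrix.of_apply,
        if_neg (Fin.succ_ne_zero j), hN,
        Matrix.updateCol_ne (Fin.succ_ne_zero k), hQ]
      rw [hr0 k]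
      ring
    rw [hsub]
    simp
  -- Step D : det (Q x) = (m * x) * det R where R = updateColumn (Q 0) 0 1
  set R : Matrix (Fin m) (Fin m) ℝ := (Q 0).updateCol 0 (fun _ => 1) with hR
  have stepD : ∀ x : ℝ, (Q x).det = (m * x) * R.det := by
    intro x
    have h := Matrix.det_updateCol_sum (Q x) 0 (fun _ => (1:ℝ))
    have hv : (fun j => ∑ i, (1:ℝ) • (Q x) j i)
        = (((m:ℝ) * x) • fun _ => (1:ℝ)) := by
      funext j
      have h1 : ∑ i : Fin m, (1:ℝ) • (Q x) j i = ↑m * x := by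
        simp only [one_smul, hQ, Matrix.of_apply]
        rw [Finset.sum_add_distrib, hsum j]
        simp [mul_comm]
      simpa using h1
    rw [hv] at h
    simp only [one_smul] at h
    have h2 : ((Q x).updateCol 0 (((m:ℝ) * x) • fun _ => (1:ℝ))).det
        = ((m:ℝ) * x) * ((Q x).updateCol 0 (fun _ => (1:ℝ))).det :=
      Matrix.det_updateCol_smul (Q x) 0 ((m:ℝ) * x) (fun _ => (1:ℝ))
    have h3 : ((Q x).updateCol 0 (fun _ => (1:ℝ))).det = R.det := by
      rw [← Matrix.det_transpose ((Q x).updateCol 0 (fun _ => 1)),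
          ← Matrix.det_transpose R]
      apply Matrix.det_eq_of_forall_row_eq_smul_add_const
        (c := fun k => if k = 0 then 0 else x) (k := 0) (by simp)
      intro i j
      by_cases hi : i = 0
      · subst hi; simp [hR, Matrix.updateCol_self]
      · simp only [Matrix.transpose_apply, Matrix.updateCol_ne hi,
          Matrix.updateCol_self, if_neg hi, hR, hQ, Matrix.of_apply]
        ring
    rw [← h, h2, h3]
  have hdetM : M.det = (m : ℝ) * R.det := by
    rw [stepC1, stepC2, stepC3, stepD 1, mul_one]
  refine ⟨part1, fun x => ?_⟩
  rw [stepD x, hdetM]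
  ring

/-- For an odd prime `p`, `d : ℤ` with `(d/p) = −1`, and every real `x`:
`det[x + ((j²+dk²)/p)]_{0≤j,k≤(p−1)/2} = T(d,p)` and
`det[x + ((j²+dk²)/p)]_{1≤j,k≤(p−1)/2} = x·T(d,p)`. -/
theorem stmt19 (p : ℕ) [Fact p.Prime] (hp2 : p ≠ 2) (d : ℤ)
    (hd : legendreSym p d = -1) (x : ℝ) :
    Matrix.det (Matrix.of fun j k : Fin ((p + 1) / 2) =>
        x + (legendreSym p (((j : ℕ) : ℤ) ^ 2 + d * ((k : ℕ) : ℤ) ^ 2) : ℝ)) =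
      (Matrix.det (Matrix.of fun j k : Fin ((p + 1) / 2) =>
        (legendreSym p (((j : ℕ) : ℤ) ^ 2 + d * ((k : ℕ) : ℤ) ^ 2) : ℤ)) : ℝ) ∧
    Matrix.det (Matrix.of fun j k : Fin ((p - 1) / 2) =>
        x + (legendreSym p ((((j : ℕ) : ℤ) + 1) ^ 2 + d * (((k : ℕ) : ℤ) + 1) ^ 2) : ℝ)) =
      x * (Matrix.det (Matrix.of fun j k : Fin ((p + 1) / 2) =>
        (legendreSym p (((j : ℕ) : ℤ) ^ 2 + d * ((k : ℕ) : ℤ) ^ 2) : ℤ)) : ℝ) := by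
  have hpp : p.Prime := Fact.out
  obtain ⟨m, hp⟩ : ∃ m, p = 2 * m + 1 := by
    obtain ⟨m, hm⟩ := hpp.odd_of_ne_two hp2
    exact ⟨m, by omega⟩
  have hm1 : 1 ≤ m := by have := hpp.one_lt; omega
  have h₁ : (p + 1) / 2 = m + 1 := by omega
  have h₂ : (p - 1) / 2 = m := by omega
  rw [h₁, h₂]
  set M : Matrix (Fin (m+1)) (Fin (m+1)) ℝ := Matrix.of fun j k =>
    ((legendreSym p (((j : ℕ) : ℤ) ^ 2 + d * ((k : ℕ) : ℤ) ^ 2) : ℤ) : ℝ) with hM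
  -- nonvanishing of casts
  have hnz : ∀ v : ℕ, 0 < v → v < p → ((v : ℤ) : ZMod p) ≠ 0 := by
    intro v h1 h2 h
    push_cast at h
    rw [ZMod.natCast_eq_zero_iff] at h
    have := Nat.le_of_dvd h1 h
    omega
  have hvs : ∀ k : Fin m, (0 : ℕ) < ((k.succ : Fin (m+1)) : ℕ)
      ∧ ((k.succ : Fin (m+1)) : ℕ) < p := by
    intro k
    rw [Fin.val_succ]
    constructor
    · omega
    · have := k.isLt; omega
  -- hypotheses of detkey
  have h00 : M 0 0 = 0 := by
    simp only [hM, Matrix.of_apply]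
    norm_num [legendreSym.at_zero]
  have hr0 : ∀ k : Fin m, M 0 k.succ = -1 := by
    intro k
    simp only [hM, Matrix.of_apply, Fin.val_zero]
    have harg : (((0:ℕ) : ℤ)) ^ 2 + d * (((k.succ : Fin (m+1)) : ℕ) : ℤ) ^ 2
        = d * ((((k.succ : Fin (m+1)) : ℕ) : ℤ)) ^ 2 := by push_cast; ring
    rw [harg, legendreSym.mul, hd, legendreSym.sq_one' p (hnz _ (hvs k).1 (hvs k).2)]
    norm_num
  have hc0 : ∀ j : Fin m, M j.succ 0 = 1 := by
    intro j
    simp only [hM, Matrix.of_apply, Fin.val_zero]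
    have harg : ((((j.succ : Fin (m+1)) : ℕ) : ℤ)) ^ 2 + d * (((0:ℕ) : ℤ)) ^ 2
        = ((((j.succ : Fin (m+1)) : ℕ) : ℤ)) ^ 2 := by push_cast; ring
    rw [harg, legendreSym.sq_one' p (hnz _ (hvs j).1 (hvs j).2)]
    norm_num
  have hsum0 : ∑ k : Fin m, M 0 k.succ = -(m:ℝ) := by
    rw [Finset.sum_congr rfl fun k _ => hr0 k]
    simp
  have hsum : ∀ j : Fin m, ∑ k : Fin m, M j.succ k.succ = 0 := by
    intro j
    have hint : ∑ k : Fin m, legendreSym p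
        ((((j.succ : Fin (m+1)) : ℕ) : ℤ) ^ 2
          + d * (((k.succ : Fin (m+1)) : ℕ) : ℤ) ^ 2) = 0 := by
      have hh := halfsum p m hp2 hp d hd (((j.succ : Fin (m+1)) : ℕ) : ℤ)
        (hnz _ (hvs j).1 (hvs j).2)
      rw [← hh]
      apply Finset.sum_congr rfl
      intro k _
      have harg : ((((j.succ : Fin (m+1)) : ℕ) : ℤ)) ^ 2
            + d * ((((k.succ : Fin (m+1)) : ℕ)) : ℤ) ^ 2
          = ((((j.succ : Fin (m+1)) : ℕ) : ℤ)) ^ 2 + d * (((k : ℕ) : ℤ) + 1) ^ 2 := by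
        rw [Fin.val_succ k]; push_cast; ring
      rw [harg]
    calc ∑ k : Fin m, M j.succ k.succ
        = ((∑ k : Fin m, legendreSym p
            ((((j.succ : Fin (m+1)) : ℕ) : ℤ) ^ 2
              + d * (((k.succ : Fin (m+1)) : ℕ) : ℤ) ^ 2) : ℤ) : ℝ) := by
          push_cast
          rfl
      _ = 0 := by rw [hint]; norm_num
  obtain ⟨P1, P2⟩ := detkey m hm1 M h00 hr0 hc0 hsum0 hsum
  constructor
  · have e1 : (Matrix.of fun j k : Fin (m+1) =>
        x + ((legendreSym p (((j : ℕ) : ℤ) ^ 2 + d * ((k : ℕ) : ℤ) ^ 2) : ℤ) : ℝ))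
        = Matrix.of fun j k => x + M j k := by
      ext j k
      simp [hM]
    rw [e1, P1 x]
  · have e2 : (Matrix.of fun j k : Fin m =>
        x + ((legendreSym p ((((j : ℕ) : ℤ) + 1) ^ 2 + d * (((k : ℕ) : ℤ) + 1) ^ 2) : ℤ) : ℝ))
        = Matrix.of fun j k : Fin m => x + M j.succ k.succ := by
      ext j k
      have harg : ((((j : ℕ) : ℤ) + 1) ^ 2 + d * (((k : ℕ) : ℤ) + 1) ^ 2)
          = ((((j.succ : Fin (m+1)) : ℕ)) : ℤ) ^ 2
            + d * ((((k.succ : Fin (m+1)) : ℕ)) : ℤ) ^ 2 := by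
        rw [Fin.val_succ, Fin.val_succ]
        push_cast
        ring
      simp only [hM, Matrix.of_apply, harg]
    rw [e2, P2 x]
end
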